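/- In the write-back-duration model of Algorithm 3, if a crash occurs after wb^s but before wb^e (so the WRITEBACK record was prepared but never persisted to NVM), then recovery behaves exactly as if the write-back never started: it replays all NVM WRITE records since the last persisted WRITEBACK record onto the disk page, and every write w followed by a sync before the crash is reflected in the recovered page (modulo later overwrites). -/

import Mathlib

/- Byte-granularity model: a page is a function from offsets to bytes; a
   record is a partial overwrite (off, len, data) within the page. -/

/-- A page of `n` bytes. -/
abbrev Page (n : ℕ) := Fin n → UInt8

/-- A partial-write record: bytes `[off, off+len)` get `data 0, …, data (len-1)`. -/
structure Rec (n : ℕ) where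
  off  : ℕ
  len  : ℕ
  data : ℕ → UInt8
  wf   : off + len ≤ n

/-- `r` covers offset `i`. -/
def covers {n : ℕ} (r : Rec n) (i : Fin n) : Prop :=
  r.off ≤ i.val ∧ i.val < r.off + r.len

/-- Apply one partial-write record to a page. -/
def applyRec {n : ℕ} (r : Rec n) (p : Page n) : Page n := fun i =>
  if r.off ≤ i.val ∧ i.val < r.off + r.len then r.data (i.val - r.off) else p i

/-- Apply a list of records in order (sequential overwrite application). -/
def applyRecs {n : ℕ} (rs : List (Rec n)) (p : Page n) : Page n :=
  rs.foldl (fun p r => applyRec r p) p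

/-- NVM log entries with version ids: WRITE(vid, record) or
    WRITEBACK(vid, exp_vid). -/
inductive Entry (n : ℕ)
  | write (vid : ℕ) (r : Rec n)
  | wbMark (vid : ℕ) (expVid : ℕ)

/-- State of the Algorithm 3 model: cache page, disk page, NVM log, the
    auto-increment version counter `page_ver_id`, and the volatile prepared
    write-back record (its exp_vid), if a write-back is in flight. -/
structure St (n : ℕ) where
  cache : Page n
  disk  : Page n
  log   : List (Entry n)
  verId : ℕ
  prep  : Option ℕ

/-- Events: sync_write; wb^s (start of write-back, records exp_vid into the
    volatile prep_rec); wb^r (the real, nondeterministically-timed disk write: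
    disk := current cache); wb^e (end of write-back: the prepared WRITEBACK
    record is persisted to the NVM log with vid := page_ver_id). -/
inductive Ev (n : ℕ)
  | syncWrite (r : Rec n)
  | wbS
  | wbR
  | wbE

def step {n : ℕ} (s : St n) : Ev n → St n
  | .syncWrite r =>
      { s with cache := applyRec r s.cache,
               log := s.log ++ [.write s.verId r],
               verId := s.verId + 1 }
  | .wbS => { s with prep := some s.verId }
  | .wbR => { s with disk := s.cache }
  | .wbE =>
      match s.prep with
      | some e => { s with log := s.log ++ [.wbMark s.verId e],
                           verId := s.verId + 1, prep := none }
      | none => s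

def run {n : ℕ} (s : St n) (tr : List (Ev n)) : St n := tr.foldl step s

/-- Algorithm 3 recovery scan: walk the log backwards (argument is the
    reversed log), collecting WRITE records while `exp ≤ vid`; a WRITEBACK
    record updates `exp` to its exp_vid.  Result is in forward replay order. -/
def collectRev {n : ℕ} : ℕ → List (Entry n) → List (Rec n)
  | _, [] => []
  | exp, .write v r :: rest => if exp ≤ v then collectRev exp rest ++ [r] else []
  | exp, .wbMark v e :: rest => if exp ≤ v then collectRev e rest else []

/-- Algorithm 3 recovery: replay the collected records onto the disk page. -/
def recover {n : ℕ} (s : St n) : Page n :=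
  applyRecs (collectRev 0 s.log.reverse) s.disk

mutual
  /-- Well-formed traces with no write-back in flight: each wb^s is followed
      (in order, possibly interleaved with sync writes) by one wb^r and then
      one wb^e; the trace may end in any phase (a crash may occur anywhere). -/
  inductive WF0 {n : ℕ} : List (Ev n) → Prop
    | nil : WF0 []
    | sw {r : Rec n} {t} : WF0 t → WF0 (.syncWrite r :: t)
    | start {t} : WFa t → WF0 (.wbS :: t)
  /-- After wb^s, before wb^r. -/
  inductive WFa {n : ℕ} : List (Ev n) → Prop
    | nil : WFa []
    | sw {r : Rec n} {t} : WFa t → WFa (.syncWrite r :: t)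
    | real {t} : WFb t → WFa (.wbR :: t)
  /-- After wb^r, before wb^e. -/
  inductive WFb {n : ℕ} : List (Ev n) → Prop
    | nil : WFb []
    | sw {r : Rec n} {t} : WFb t → WFb (.syncWrite r :: t)
    | fin {t} : WF0 t → WFb (.wbE :: t)
end

/-- Remove the pending real disk write from the event list. -/
def dropWbR {n : ℕ} : List (Ev n) → List (Ev n) :=
  List.filter fun e => match e with | .wbR => false | _ => true

/-!
Every well-formed trace keeps recovery equal to the cache.  While a write-back is in flight with
`exp_vid = e`, the WRITE records logged since `e` already reproduce the cache when replayed onto it;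
once wb^r has copied the cache to disk they reproduce it from the disk, which is exactly what the
WRITEBACK record persisted by wb^e tells recovery to do.  Before wb^e nothing but WRITE records has
been logged since wb^s, so recovery of the crashed trace and of the trace without the write-back
both yield the cache, and the cache only depends on the sequence of sync writes.
-/

namespace Page

variable {n : ℕ}

theorem applyRec_of_covers {r : Rec n} {i : Fin n} (h : covers r i) (p : Page n) :
    applyRec r p i = r.data (i.val - r.off) :=
  if_pos h

theorem applyRec_of_not_covers {r : Rec n} {i : Fin n} (h : ¬ covers r i) (p : Page n) :
    applyRec r p i = p i :=
  if_neg h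

theorem applyRecs_append (L M : List (Rec n)) (p : Page n) :
    applyRecs (L ++ M) p = applyRecs M (applyRecs L p) :=
  List.foldl_append

theorem applyRecs_append_singleton (L : List (Rec n)) (r : Rec n) (p : Page n) :
    applyRecs (L ++ [r]) p = applyRec r (applyRecs L p) :=
  applyRecs_append L [r] p

theorem applyRecs_of_forall_not_covers {L : List (Rec n)} {i : Fin n}
    (h : ∀ r ∈ L, ¬ covers r i) (p : Page n) : applyRecs L p i = p i := by
  induction L generalizing p with
  | nil => rfl
  | cons r L ih =>
    rw [List.forall_mem_cons] at h
    exact (ih h.2 _).trans (applyRec_of_not_covers h.1 p)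

theorem applyRecs_apply_congr (L : List (Rec n)) {p q : Page n} {i : Fin n} (h : p i = q i) :
    applyRecs L p i = applyRecs L q i := by
  induction L using List.reverseRecOn with
  | nil => exact h
  | append_singleton L r ih =>
    rw [applyRecs_append_singleton, applyRecs_append_singleton]
    by_cases hr : covers r i
    · rw [applyRec_of_covers hr, applyRec_of_covers hr]
    · rw [applyRec_of_not_covers hr, applyRec_of_not_covers hr, ih]

theorem isFixedPt_applyRecs_append_singleton {L : List (Rec n)} {c : Page n}
    (hc : Function.IsFixedPt (applyRecs L) c) (r : Rec n) :
    Function.IsFixedPt (applyRecs (L ++ [r])) (applyRec r c) := by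
  funext i
  rw [applyRecs_append_singleton]
  by_cases hr : covers r i
  · rw [applyRec_of_covers hr, applyRec_of_covers hr]
  · rw [applyRec_of_not_covers hr, applyRec_of_not_covers hr,
      applyRecs_apply_congr L (applyRec_of_not_covers hr c), hc]

theorem isFixedPt_applyRecs (L : List (Rec n)) (p : Page n) :
    Function.IsFixedPt (applyRecs L) (applyRecs L p) := by
  induction L using List.reverseRecOn with
  | nil => rfl
  | append_singleton L r ih =>
    rw [applyRecs_append_singleton]
    exact isFixedPt_applyRecs_append_singleton ih r

end Page

section Recovery

variable {n : ℕ}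

def Entry.vid : Entry n → ℕ
  | .write v _ => v
  | .wbMark v _ => v

theorem collectRev_eq_nil {e : ℕ} {l : List (Entry n)} (h : ∀ ent ∈ l, ent.vid < e) :
    collectRev e l = [] := by
  cases l with
  | nil => rfl
  | cons ent rest =>
    have hlt := h ent List.mem_cons_self
    cases ent <;> simp_all [collectRev, Entry.vid]

def recoveryRecs (e : ℕ) (s : St n) : List (Rec n) :=
  collectRev e s.log.reverse

theorem recover_eq (s : St n) : recover s = applyRecs (recoveryRecs 0 s) s.disk :=
  rfl

theorem recoveryRecs_step_syncWrite {e : ℕ} {s : St n} (he : e ≤ s.verId) (r : Rec n) :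
    recoveryRecs e (step s (.syncWrite r)) = recoveryRecs e s ++ [r] := by
  simp [recoveryRecs, step, collectRev, he]

theorem recover_step_syncWrite {s : St n} (h : recover s = s.cache) (r : Rec n) :
    recover (step s (.syncWrite r)) = (step s (.syncWrite r)).cache := by
  change applyRecs (recoveryRecs 0 (step s (.syncWrite r))) s.disk = applyRec r s.cache
  rw [recoveryRecs_step_syncWrite (Nat.zero_le _), Page.applyRecs_append_singleton, ← recover_eq, h]

theorem recover_run_map_syncWrite (L : List (Rec n)) {s : St n} (h : recover s = s.cache) :
    recover (run s (L.map .syncWrite)) = (run s (L.map .syncWrite)).cache := by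
  induction L generalizing s with
  | nil => exact h
  | cons r L ih => exact ih (recover_step_syncWrite h r)

def LogBelowVerId (s : St n) : Prop :=
  ∀ ent ∈ s.log, ent.vid < s.verId

def IdleInv (s : St n) : Prop :=
  LogBelowVerId s ∧ recover s = s.cache ∧ s.prep = none

def StartedInv (s : St n) : Prop :=
  LogBelowVerId s ∧ recover s = s.cache ∧
    ∃ e ≤ s.verId, s.prep = some e ∧ Function.IsFixedPt (applyRecs (recoveryRecs e s)) s.cache

def DiskWrittenInv (s : St n) : Prop :=
  LogBelowVerId s ∧ recover s = s.cache ∧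
    ∃ e ≤ s.verId, s.prep = some e ∧ applyRecs (recoveryRecs e s) s.disk = s.cache

theorem Entry.forall_vid_lt_append_singleton {l : List (Entry n)} {v : ℕ}
    (h : ∀ ent ∈ l, ent.vid < v) {x : Entry n} (hx : x.vid = v) :
    ∀ ent ∈ l ++ [x], ent.vid < v + 1 := by
  intro ent hent
  rcases List.mem_append.1 hent with hent | hent
  · exact Nat.lt_succ_of_lt (h ent hent)
  · rw [List.mem_singleton.1 hent, hx]
    exact Nat.lt_succ_self v

theorem LogBelowVerId.step_syncWrite {s : St n} (h : LogBelowVerId s) (r : Rec n) :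
    LogBelowVerId (step s (.syncWrite r)) :=
  Entry.forall_vid_lt_append_singleton h rfl

theorem IdleInv.step_syncWrite {s : St n} (h : IdleInv s) (r : Rec n) :
    IdleInv (step s (.syncWrite r)) :=
  ⟨h.1.step_syncWrite r, recover_step_syncWrite h.2.1 r, h.2.2⟩

theorem StartedInv.step_syncWrite {s : St n} (h : StartedInv s) (r : Rec n) :
    StartedInv (step s (.syncWrite r)) := by
  obtain ⟨hlog, hrec, e, he, hprep, hfix⟩ := h
  refine ⟨hlog.step_syncWrite r, recover_step_syncWrite hrec r, e, Nat.le_succ_of_le he, hprep, ?_⟩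
  rw [recoveryRecs_step_syncWrite he]
  exact Page.isFixedPt_applyRecs_append_singleton hfix r

theorem DiskWrittenInv.step_syncWrite {s : St n} (h : DiskWrittenInv s) (r : Rec n) :
    DiskWrittenInv (step s (.syncWrite r)) := by
  obtain ⟨hlog, hrec, e, he, hprep, hdisk⟩ := h
  refine ⟨hlog.step_syncWrite r, recover_step_syncWrite hrec r, e, Nat.le_succ_of_le he, hprep, ?_⟩
  change applyRecs (recoveryRecs e (step s (.syncWrite r))) s.disk = applyRec r s.cache
  rw [recoveryRecs_step_syncWrite he, Page.applyRecs_append_singleton, hdisk]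

theorem IdleInv.step_wbS {s : St n} (h : IdleInv s) : StartedInv (step s .wbS) := by
  obtain ⟨hlog, hrec, -⟩ := h
  refine ⟨hlog, hrec, s.verId, le_rfl, rfl, ?_⟩
  have hnil : recoveryRecs s.verId s = [] :=
    collectRev_eq_nil fun ent hent => hlog ent (List.mem_reverse.1 hent)
  change Function.IsFixedPt (applyRecs (recoveryRecs s.verId s)) s.cache
  rw [hnil]
  rfl

theorem StartedInv.step_wbR {s : St n} (h : StartedInv s) : DiskWrittenInv (step s .wbR) := by
  obtain ⟨hlog, hrec, e, he, hprep, hfix⟩ := h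
  refine ⟨hlog, ?_, e, he, hprep, hfix⟩
  change applyRecs (recoveryRecs 0 s) s.cache = s.cache
  rw [← hrec]
  exact Page.isFixedPt_applyRecs _ _

theorem DiskWrittenInv.step_wbE {s : St n} (h : DiskWrittenInv s) : IdleInv (step s .wbE) := by
  obtain ⟨c, d, l, v, prep⟩ := s
  obtain ⟨hlog, -, e, -, rfl, hdisk⟩ := h
  refine ⟨Entry.forall_vid_lt_append_singleton hlog rfl, ?_, rfl⟩
  simpa [recover, recoveryRecs, step, collectRev] using hdisk

theorem recover_run_eq_cache (t : List (Ev n)) (s : St n) :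
    (WF0 t → IdleInv s → recover (run s t) = (run s t).cache) ∧
    (WFa t → StartedInv s → recover (run s t) = (run s t).cache) ∧
    (WFb t → DiskWrittenInv s → recover (run s t) = (run s t).cache) := by
  induction t generalizing s with
  | nil => exact ⟨fun _ h => h.2.1, fun _ h => h.2.1, fun _ h => h.2.1⟩
  | cons e t ih =>
    refine ⟨fun hwf h => ?_, fun hwf h => ?_, fun hwf h => ?_⟩
    · cases hwf with
      | sw hwf => exact (ih _).1 hwf (h.step_syncWrite _)
      | start hwf => exact (ih _).2.1 hwf h.step_wbS
    · cases hwf with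
      | sw hwf => exact (ih _).2.1 hwf (h.step_syncWrite _)
      | real hwf => exact (ih _).2.2 hwf h.step_wbR
    · cases hwf with
      | sw hwf => exact (ih _).2.2 hwf (h.step_syncWrite _)
      | fin hwf => exact (ih _).1 hwf h.step_wbE

theorem recover_run_of_WF0 {t : List (Ev n)} (hwf : WF0 t) (p₀ : Page n) :
    let s := run ⟨p₀, p₀, [], 0, none⟩ t
    recover s = s.cache :=
  (recover_run_eq_cache t _).1 hwf ⟨fun _ h => absurd h List.not_mem_nil, rfl, rfl⟩

end Recovery

section Traces

variable {n : ℕ}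

def writesOf (t : List (Ev n)) : List (Rec n) :=
  t.filterMap fun | .syncWrite r => some r | _ => none

theorem writesOf_append (a b : List (Ev n)) : writesOf (a ++ b) = writesOf a ++ writesOf b :=
  List.filterMap_append

theorem syncWrite_mem_of_mem_writesOf {t : List (Ev n)} {r : Rec n} (h : r ∈ writesOf t) :
    Ev.syncWrite r ∈ t := by
  obtain ⟨e, he, hr⟩ := List.mem_filterMap.1 h
  cases e <;> simp_all

theorem run_append (s : St n) (a b : List (Ev n)) : run s (a ++ b) = run (run s a) b :=
  List.foldl_append

theorem writesOf_map_syncWrite (L : List (Rec n)) : writesOf (L.map .syncWrite) = L := by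
  simp [writesOf, List.filterMap_map]

theorem run_cache (t : List (Ev n)) (s : St n) :
    (run s t).cache = applyRecs (writesOf t) s.cache := by
  induction t generalizing s with
  | nil => rfl
  | cons e t ih =>
    rw [run, List.foldl_cons, ← run, ih]
    cases e with
    | wbE => cases hp : s.prep <;> simp [step, writesOf, hp]
    | _ => rfl

theorem dropWbR_eq_map_writesOf {t : List (Ev n)} (hS : Ev.wbS ∉ t) (hE : Ev.wbE ∉ t) :
    dropWbR t = (writesOf t).map .syncWrite := by
  induction t with
  | nil => rfl
  | cons e t ih => cases e <;> simp_all [dropWbR, writesOf]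

theorem WF0_append_wbS_cons : ∀ {t₁ t₂ : List (Ev n)},
    (WF0 (t₁ ++ Ev.wbS :: t₂) → WF0 t₁ ∧ WFa t₂) ∧
    (WFa (t₁ ++ Ev.wbS :: t₂) → WFa t₁ ∧ WFa t₂) ∧
    (WFb (t₁ ++ Ev.wbS :: t₂) → WFb t₁ ∧ WFa t₂)
  | [], _ => ⟨fun | .start h => ⟨.nil, h⟩, nofun, nofun⟩
  | _ :: _, _ =>
    ⟨fun
      | .sw h => (WF0_append_wbS_cons.1 h).imp_left .sw
      | .start h => (WF0_append_wbS_cons.2.1 h).imp_left .start,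
     fun
      | .sw h => (WF0_append_wbS_cons.2.1 h).imp_left .sw
      | .real h => (WF0_append_wbS_cons.2.2 h).imp_left .real,
     fun
      | .sw h => (WF0_append_wbS_cons.2.2 h).imp_left .sw
      | .fin h => (WF0_append_wbS_cons.1 h).imp_left .fin⟩

theorem wbS_not_mem_of_WFa : ∀ {t : List (Ev n)},
    (WFa t → Ev.wbE ∉ t → Ev.wbS ∉ t) ∧ (WFb t → Ev.wbE ∉ t → Ev.wbS ∉ t)
  | [] => ⟨fun _ _ => List.not_mem_nil, fun _ _ => List.not_mem_nil⟩
  | _ :: _ =>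
    ⟨fun
      | .sw h, hE => by simpa using wbS_not_mem_of_WFa.1 h (by simpa using hE)
      | .real h, hE => by simpa using wbS_not_mem_of_WFa.2 h (by simpa using hE),
     fun
      | .sw h, hE => by simpa using wbS_not_mem_of_WFa.2 h (by simpa using hE)
      | .fin _, hE => absurd List.mem_cons_self hE⟩

end Traces

/-- If a crash occurs after wb^s but before wb^e, the
    prepared WRITEBACK record was never persisted to NVM, and recovery behaves
    exactly as if the write-back never started: it equals recovery of the
    trace with the pending write-back (the wb^s and any pending wb^r) removed,
    and every write followed by a sync before the crash is reflected in the
    recovered page, modulo later overwrites. -/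
theorem crash_between_wbs_wbe (n : ℕ) (p₀ : Page n) (t₁ t₂ : List (Ev n))
    (hwf : WF0 (t₁ ++ Ev.wbS :: t₂)) (hne : Ev.wbE ∉ t₂) :
    let init : St n := ⟨p₀, p₀, [], 0, none⟩
    let s := run init (t₁ ++ Ev.wbS :: t₂)
    recover s = recover (run init (t₁ ++ dropWbR t₂)) ∧
    (∀ a r b, t₁ ++ Ev.wbS :: t₂ = a ++ Ev.syncWrite r :: b →
      ∀ i : Fin n, covers r i →
        (∀ r', Ev.syncWrite r' ∈ b → ¬ covers r' i) →
        recover s i = r.data (i.val - r.off)) := by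
  intro init s
  obtain ⟨hwf₁, hwf₂⟩ := WF0_append_wbS_cons.1 hwf
  have hs : recover s = applyRecs (writesOf (t₁ ++ Ev.wbS :: t₂)) p₀ := by
    rw [recover_run_of_WF0 hwf p₀, run_cache]
  have hdrop : dropWbR t₂ = (writesOf t₂).map .syncWrite :=
    dropWbR_eq_map_writesOf (wbS_not_mem_of_WFa.1 hwf₂ hne) hne
  have hdropped : recover (run init (t₁ ++ dropWbR t₂)) = applyRecs (writesOf (t₁ ++ t₂)) p₀ := by
    rw [hdrop, run_append, recover_run_map_syncWrite _ (recover_run_of_WF0 hwf₁ p₀), run_cache,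
      run_cache, writesOf_map_syncWrite, ← Page.applyRecs_append, writesOf_append]
  refine ⟨?_, fun a r b heq i hcov hlater => ?_⟩
  · rw [hs, hdropped, writesOf_append, writesOf_append]
    rfl
  · have hb : ∀ r' ∈ writesOf b, ¬ covers r' i :=
      fun r' hr' => hlater r' (syncWrite_mem_of_mem_writesOf hr')
    rw [hs, heq, writesOf_append, Page.applyRecs_append]
    exact (Page.applyRecs_of_forall_not_covers hb _).trans (Page.applyRec_of_covers hcov _)
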